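/- Let p be a prime, l ≥ 1, n ≥ 1, j ≥ 0, and let α' = n·j + 1 + k + [p = 2 and k > 0], where k is the p-adic valuation of n. For each residue r with 0 < r < p, the map x' ↦ ⌊(p^j·(p·x' + r))^n / p^{α'}⌋ mod p^l is a bijection of {0, ..., p^l − 1}. -/

import Mathlib

/-!
Write `α = 1 + k + [p = 2 ∧ 0 < k]`. By lifting the exponent, for `u = p x + r` and
`w = p y + r` the `p`-adic valuation of `uⁿ - wⁿ` is `α + v_p(x - y)`, except when `p = 2` and
`n` is even, where it is `α - 1 + v₂((x - y)(x + y + 1))` and one of the two factors is odd.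
So all `(p x + r)ⁿ` agree modulo `p^α`, while for distinct `x, y < p^l` they differ modulo
`p^(α + l)`: the `l` base-`p` digits of `(p x + r)ⁿ` above position `α` determine `x`.
The factor `p^j` only shifts these digits, and an injective self-map of a finite set is
bijective.
-/

theorem Nat.ModEq.mul_of_div_modEq {a b m c : ℕ} (h : a ≡ b [MOD m])
    (hdiv : a / m ≡ b / m [MOD c]) : a ≡ b [MOD m * c] := by
  unfold Nat.ModEq at *
  rw [Nat.mod_mul, Nat.mod_mul, h, hdiv]

theorem Int.pow_add_dvd_pow_sub_pow_iff {p : ℕ} (hp : p.Prime) {n k : ℕ}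
    (hk : emultiplicity p n = k) (hpn : Odd p ∨ ¬ p ∣ n) {u w : ℤ}
    (huw : (p : ℤ) ∣ u - w) (hu : ¬ (p : ℤ) ∣ u) (m : ℕ) :
    (p : ℤ) ^ (m + k) ∣ u ^ n - w ^ n ↔ (p : ℤ) ^ m ∣ u - w := by
  have hLTE : emultiplicity (p : ℤ) (u ^ n - w ^ n) = emultiplicity (p : ℤ) (u - w) + k := by
    rcases hpn with hodd | hndvd
    · rw [Int.emultiplicity_pow_sub_pow hp hodd huw hu, hk]
    · rw [emultiplicity_eq_zero.mpr hndvd] at hk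
      rw [emultiplicity_pow_sub_pow_of_prime (Nat.prime_iff_prime_int.mp hp) huw hu
        (by exact_mod_cast hndvd), ← hk, add_zero]
  rw [pow_dvd_iff_le_emultiplicity, pow_dvd_iff_le_emultiplicity, hLTE, Nat.cast_add,
    ENat.add_le_add_iff_right (ENat.natCast_ne_top k)]

theorem Int.two_pow_add_dvd_pow_sub_pow_iff {n k : ℕ} (hn : Even n)
    (hk : emultiplicity 2 n = k) {u w : ℤ} (huw : 2 ∣ u - w) (hu : ¬ 2 ∣ u) (m : ℕ) :
    2 ^ (m + k) ∣ u ^ n - w ^ n ↔ 2 ^ (m + 1) ∣ u ^ 2 - w ^ 2 := by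
  have hLTE := Int.two_pow_sub_pow huw hu hn
  have hk' : emultiplicity (2 : ℤ) n = k := (Int.natCast_emultiplicity 2 n).trans hk
  rw [← emultiplicity_mul Int.prime_two, ← sq_sub_sq, hk'] at hLTE
  rw [pow_dvd_iff_le_emultiplicity, pow_dvd_iff_le_emultiplicity,
    ← ENat.add_le_add_iff_right ENat.one_ne_top, hLTE, Nat.cast_add, Nat.cast_add, Nat.cast_one,
    add_right_comm, ENat.add_le_add_iff_right (ENat.natCast_ne_top k)]

def codingExponent (p k : ℕ) : ℕ := 1 + k + if p = 2 ∧ 0 < k then 1 else 0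

theorem Int.pow_codingExponent_add_dvd_iff {p n k : ℕ} (hp : p.Prime)
    (hk : emultiplicity p n = k) (h2 : ¬ (p = 2 ∧ 0 < k)) {r : ℤ} (hr : ¬ (p : ℤ) ∣ r)
    (x y : ℤ) (m : ℕ) :
    (p : ℤ) ^ (codingExponent p k + m) ∣ (p * x + r) ^ n - (p * y + r) ^ n ↔
      (p : ℤ) ^ m ∣ x - y := by
  have hpn : Odd p ∨ ¬ p ∣ n := by
    by_cases hp2 : p = 2
    · have hk0 : k = 0 := by omega
      rw [hk0, Nat.cast_zero, emultiplicity_eq_zero] at hk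
      exact Or.inr hk
    · exact Or.inl (hp.odd_of_ne_two hp2)
  have hu : ¬ (p : ℤ) ∣ p * x + r := by rwa [← dvd_add_right (dvd_mul_right _ x)] at hr
  rw [codingExponent, if_neg h2, add_zero, show 1 + k + m = (m + 1) + k by ring,
    Int.pow_add_dvd_pow_sub_pow_iff hp hk hpn ⟨x - y, by ring⟩ hu,
    show p * x + r - (p * y + r) = p * (x - y) by ring, pow_succ',
    mul_dvd_mul_iff_left (by exact_mod_cast hp.ne_zero)]

theorem Int.two_pow_codingExponent_add_dvd_iff {n k : ℕ} (hk0 : 0 < k)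
    (hk : emultiplicity 2 n = k) {r : ℤ} (hr : ¬ 2 ∣ r) (x y : ℤ) (m : ℕ) :
    2 ^ (codingExponent 2 k + m) ∣ (2 * x + r) ^ n - (2 * y + r) ^ n ↔
      2 ^ (m + 1) ∣ (x - y) * (x + y + r) := by
  have hn : Even n := by
    rw [even_iff_two_dvd, ← pow_one 2, pow_dvd_iff_le_emultiplicity, hk]
    exact_mod_cast hk0
  have hu : ¬ 2 ∣ 2 * x + r := by rwa [← dvd_add_right (dvd_mul_right _ x)] at hr
  rw [codingExponent, if_pos ⟨rfl, hk0⟩, show 1 + k + 1 + m = (m + 2) + k by ring,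
    Int.two_pow_add_dvd_pow_sub_pow_iff hn hk ⟨x - y, by ring⟩ hu,
    show (2 * x + r) ^ 2 - (2 * y + r) ^ 2 = 2 ^ 2 * ((x - y) * (x + y + r)) by ring,
    show m + 2 + 1 = 2 + (m + 1) by ring, pow_add, mul_dvd_mul_iff_left (by norm_num)]

theorem Nat.eq_of_two_pow_succ_dvd_sub_mul_add_add_one {l x y : ℕ} (hx : x < 2 ^ l)
    (hy : y < 2 ^ l)
    (h : (2 : ℤ) ^ (l + 1) ∣ (x - y) * (x + y + 1)) : x = y := by
  rcases Int.even_or_odd ((x : ℤ) - y) with ⟨c, hc⟩ | ⟨c, hc⟩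
  · have hodd : ¬ (2 : ℤ) ∣ x + y + 1 := by omega
    have hdvd := (Int.prime_two.coprime_iff_not_dvd.mpr hodd).pow_left.dvd_of_dvd_mul_right h
    refine (Nat.modEq_iff_dvd.mpr ?_).symm.eq_of_lt_of_lt hx hy
    push_cast
    exact (pow_dvd_pow 2 l.le_succ).trans hdvd
  · have hodd : ¬ (2 : ℤ) ∣ x - y := by omega
    have hdvd := (Int.prime_two.coprime_iff_not_dvd.mpr hodd).pow_left.dvd_of_dvd_mul_left h
    have hle := Nat.le_of_dvd (by omega) (by exact_mod_cast hdvd : 2 ^ (l + 1) ∣ x + y + 1)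
    rw [pow_succ] at hle
    omega

section Coding

variable {p n k r : ℕ} (hp : p.Prime) (hk : emultiplicity p n = k) (hr0 : 0 < r) (hrp : r < p)
include hp hk hr0 hrp

theorem mul_add_pow_modEq (x y : ℕ) :
    (p * x + r) ^ n ≡ (p * y + r) ^ n [MOD p ^ codingExponent p k] := by
  have hr : ¬ (p : ℤ) ∣ r := by exact_mod_cast Nat.not_dvd_of_pos_of_lt hr0 hrp
  rw [Nat.modEq_iff_dvd]
  push_cast
  by_cases h2 : p = 2 ∧ 0 < k
  · obtain ⟨rfl, hk0⟩ := h2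
    have hpar : (2 : ℤ) ∣ (y - x) * (y + x + r) := by
      rcases Int.even_or_odd ((y : ℤ) - x) with ⟨c, hc⟩ | ⟨c, hc⟩
      · exact Dvd.dvd.mul_right ⟨c, by omega⟩ _
      · exact Dvd.dvd.mul_left (by push_cast at hr; omega) _
    simpa using (Int.two_pow_codingExponent_add_dvd_iff hk0 hk hr y x 0).mpr (by simpa using hpar)
  · simpa using (Int.pow_codingExponent_add_dvd_iff hp hk h2 hr y x 0).mpr (one_dvd _)

theorem eq_of_mul_add_pow_modEq {l x y : ℕ} (hx : x < p ^ l) (hy : y < p ^ l)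
    (h : (p * x + r) ^ n ≡ (p * y + r) ^ n [MOD p ^ (codingExponent p k + l)]) : x = y := by
  have hr : ¬ (p : ℤ) ∣ r := by exact_mod_cast Nat.not_dvd_of_pos_of_lt hr0 hrp
  rw [Nat.modEq_iff_dvd] at h
  push_cast at h
  by_cases h2 : p = 2 ∧ 0 < k
  · obtain ⟨rfl, hk0⟩ := h2
    obtain rfl : r = 1 := by omega
    exact (Nat.eq_of_two_pow_succ_dvd_sub_mul_add_add_one hy hx
      ((Int.two_pow_codingExponent_add_dvd_iff hk0 hk hr y x l).mp h)).symm
  · refine (Nat.modEq_iff_dvd.mpr ?_).eq_of_lt_of_lt hx hy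
    exact_mod_cast (Int.pow_codingExponent_add_dvd_iff hp hk h2 hr y x l).mp h

end Coding

theorem extended_power_coding_theorem_general (p : ℕ) (hp : p.Prime) (l : ℕ)
    (n q k : ℕ) (hnqk : n = q * p ^ k) (hq : ¬ p ∣ q) (j : ℕ)
    (r : ℕ) (hr0 : 0 < r) (hrp : r < p) :
    Set.BijOn
      (fun x' : ℕ =>
        ((p ^ j * (p * x' + r)) ^ n /
          p ^ (n * j + 1 + k + if p = 2 ∧ 0 < k then 1 else 0)) % p ^ l)
      (Set.Iio (p ^ l)) (Set.Iio (p ^ l)) := by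
  have hk : emultiplicity p n = k := by
    rw [hnqk, emultiplicity_mul hp.prime, emultiplicity_pow_self_of_prime hp.prime,
      emultiplicity_eq_zero.mpr hq, zero_add]
  have hdiv (x : ℕ) : (p ^ j * (p * x + r)) ^ n /
      p ^ (n * j + 1 + k + if p = 2 ∧ 0 < k then 1 else 0) =
        (p * x + r) ^ n / p ^ codingExponent p k := by
    rw [mul_pow, ← pow_mul, codingExponent,
      show n * j + 1 + k + (if p = 2 ∧ 0 < k then 1 else 0) =
        j * n + (1 + k + if p = 2 ∧ 0 < k then 1 else 0) by ring, pow_add,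
      Nat.mul_div_mul_left _ _ (pow_pos hp.pos _)]
  refine ((Set.finite_Iio _).injOn_iff_bijOn_of_mapsTo
    fun x _ => Set.mem_Iio.mpr (Nat.mod_lt _ (pow_pos hp.pos l))).mp ?_
  intro x hx y hy hxy
  simp only [hdiv] at hxy
  refine eq_of_mul_add_pow_modEq hp hk hr0 hrp hx hy ?_
  rw [pow_add]
  exact (mul_add_pow_modEq hp hk hr0 hrp x y).mul_of_div_modEq hxy

theorem extended_power_coding_theorem (p : ℕ) (hp : p.Prime) (l : ℕ) (hl : 1 ≤ l)
    (n q k : ℕ) (hn : 0 < n) (hnqk : n = q * p ^ k) (hq : ¬ p ∣ q) (j : ℕ)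
    (r : ℕ) (hr0 : 0 < r) (hrp : r < p) :
    Set.BijOn
      (fun x' : ℕ =>
        ((p ^ j * (p * x' + r)) ^ n /
          p ^ (n * j + 1 + k + if p = 2 ∧ 0 < k then 1 else 0)) % p ^ l)
      (Set.Iio (p ^ l)) (Set.Iio (p ^ l)) :=
  extended_power_coding_theorem_general p hp l n q k hnqk hq j r hr0 hrp
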